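/- arXiv:2508.02699 — 6 statements merged into one kernel-verified Lean document; each statement's English description precedes it below -/
import Mathlib

section
/- Let U be a finite-dimensional vector space over a field F and let μ be a fuzzy subspace of U. Then μ has a fuzzy basis, i.e., there exists a basis β of U such that for every finite set of distinct vectors x₁, …, xₙ ∈ β and all nonzero scalars c₁, …, cₙ ∈ F, μ(c₁x₁ + ⋯ + cₙxₙ) = min{μ(x₁), …, μ(xₙ)}. -/
/-- A fuzzy subspace of a vector space `U` over `F`: a function into `[0,1]` with
`μ(x-y) ≥ min (μ x) (μ y)` and `μ(c • x) ≥ μ x`. -/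
def IsFuzzySubspace (F : Type*) [Field F] {U : Type*} [AddCommGroup U] [Module F U]
    (μ : U → ℝ) : Prop :=
  (∀ x, μ x ∈ Set.Icc (0 : ℝ) 1) ∧
  (∀ x y : U, min (μ x) (μ y) ≤ μ (x - y)) ∧
  (∀ (c : F) (x : U), μ x ≤ μ (c • x))

/-- The "fuzzy linear independence" condition on a set `β`: for any nonempty finite set of
distinct vectors of `β` and nonzero scalars, `μ` of the linear combination is the minimum
of the values of `μ` on those vectors. -/
def FuzzyMinOn (F : Type*) [Field F] {U : Type*} [AddCommGroup U] [Module F U]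
    (μ : U → ℝ) (β : Set U) : Prop :=
  ∀ (s : Finset U), ↑s ⊆ β → ∀ (hs : s.Nonempty) (c : U → F),
    (∀ x ∈ s, c x ≠ 0) → μ (∑ x ∈ s, c x • x) = s.inf' hs μ

/-- `β` is a fuzzy basis of the fuzzy subspace `μ` of `U`: an ordinary basis of `U`
satisfying the fuzzy min-condition. -/
def IsFuzzyBasis (F : Type*) [Field F] {U : Type*} [AddCommGroup U] [Module F U]
    (μ : U → ℝ) (β : Set U) : Prop :=
  LinearIndependent F ((↑) : β → U) ∧ Submodule.span F β = ⊤ ∧ FuzzyMinOn F μ β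

/-- `β` is a fuzzy basis of the restriction `μ|S`, where `S` is (the carrier of) a subspace:
a linearly independent subset of `S` spanning `S`, satisfying the fuzzy min-condition. -/
def IsFuzzyBasisOn (F : Type*) [Field F] {U : Type*} [AddCommGroup U] [Module F U]
    (μ : U → ℝ) (S : Set U) (β : Set U) : Prop :=
  β ⊆ S ∧ LinearIndependent F ((↑) : β → U) ∧
    S ⊆ (Submodule.span F β : Submodule F U) ∧ FuzzyMinOn F μ β

/-- Zadeh image of a fuzzy set under a map; the real `sSup` satisfies `sSup ∅ = 0`. -/
noncomputable def fuzzyImage {U V : Type*} (f : U → V) (μ : U → ℝ) : V → ℝ :=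
  fun y => sSup (μ '' {x | f x = y})

/-- Level subset of a fuzzy set: `μ_t = {x : μ x ≥ t}`. -/
def levelSet {U : Type*} (μ : U → ℝ) (t : ℝ) : Set U := {x | t ≤ μ x}

open Submodule

section FuzzyAux

variable {F : Type*} [Field F] {U : Type*} [AddCommGroup U] [Module F U] {μ : U → ℝ}

lemma fz_le_zero (hμ : IsFuzzySubspace F μ) (x : U) : μ x ≤ μ 0 := by
  have := hμ.2.1 x x
  simpa using this

/-- The level submodule, adjusted with `min t (μ 0)` so it is a submodule for all `t`. -/
def lvl (hμ : IsFuzzySubspace F μ) (t : ℝ) : Submodule F U where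
  carrier := {x | min t (μ 0) ≤ μ x}
  zero_mem' := by
    show min t (μ 0) ≤ μ 0
    exact min_le_right _ _
  add_mem' := by
    intro a b ha hb
    have hnb : μ b ≤ μ (-b) := by
      have := hμ.2.2 (-1 : F) b
      simpa using this
    have hsub := hμ.2.1 a (-b)
    rw [sub_neg_eq_add] at hsub
    exact le_trans (le_min (le_trans (le_min ha hb) (min_le_left _ _))
      (le_trans (le_trans (le_min ha hb) (min_le_right _ _)) hnb)) hsub
  smul_mem' := fun c x hx => le_trans hx (hμ.2.2 c x)

lemma mem_lvl (hμ : IsFuzzySubspace F μ) {t : ℝ} {x : U} :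
    x ∈ lvl hμ t ↔ min t (μ 0) ≤ μ x := by exact Iff.rfl

lemma lvl_lt (hμ : IsFuzzySubspace F μ) {a b : ℝ} (ha : a ∈ Set.range μ)
    (hb : b ∈ Set.range μ) (h : a < b) : lvl hμ b < lvl hμ a := by
  obtain ⟨y, hy⟩ := ha
  obtain ⟨z, hz⟩ := hb
  have hb0 : b ≤ μ 0 := hz ▸ fz_le_zero hμ z
  refine lt_of_le_of_ne (fun x hx => ?_) ?_
  · rw [mem_lvl] at hx ⊢
    exact le_trans (min_le_min_right _ h.le) hx
  intro heq
  have hyA : y ∈ lvl hμ a := by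
    rw [mem_lvl]
    exact hy ▸ min_le_left _ _
  rw [← heq, mem_lvl, min_eq_left hb0, hy] at hyA
  exact absurd hyA (not_le.2 h)

lemma fz_range_finite [FiniteDimensional F U] (hμ : IsFuzzySubspace F μ) :
    (Set.range μ).Finite := by
  apply Set.Finite.of_finite_image (f := fun t => Module.finrank F (lvl hμ t))
  · refine Set.Finite.subset (Set.finite_Iic (Module.finrank F U)) ?_
    rintro _ ⟨t, -, rfl⟩
    exact Submodule.finrank_le _
  · intro a ha b hb hab
    by_contra hne
    rcases lt_or_gt_of_ne hne with h | h
    · exact absurd hab (Submodule.finrank_lt_finrank_of_lt (lvl_lt hμ ha hb h)).ne'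
    · exact absurd hab (Submodule.finrank_lt_finrank_of_lt (lvl_lt hμ hb ha h)).ne

/-- Key construction: for an upward-closed finite set `V` of values, there is a linearly
independent set adapted to the flag of level subspaces with values in `V`. -/
lemma fz_key (hμ : IsFuzzySubspace F μ) (V : Finset ℝ) :
    ↑V ⊆ Set.range μ → (∀ v ∈ Set.range μ, ∀ u ∈ V, u ≤ v → v ∈ V) →
    ∃ β : Set U, (∀ b ∈ β, μ b ∈ (V : Set ℝ)) ∧ LinearIndependent F ((↑) : β → U) ∧
      ∀ t ∈ V, lvl hμ t ≤ span F (β ∩ (lvl hμ t : Set U)) := by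
  classical
  induction V using Finset.strongInduction with
  | _ V ih =>
    intro hVr hVup
    rcases V.eq_empty_or_nonempty with rfl | hV
    · exact ⟨∅, by simp, linearIndependent_empty _ _, by simp⟩
    · set t := V.min' hV with ht
      have htV : t ∈ V := V.min'_mem hV
      have htr : t ∈ Set.range μ := hVr htV
      have ht0 : t ≤ μ 0 := by
        obtain ⟨z, hz⟩ := htr
        exact hz ▸ fz_le_zero hμ z
      obtain ⟨β', hβ'V, hβ'li, hβ'span⟩ := ih (V.erase t) (Finset.erase_ssubset htV)
        (fun x hx => hVr (Finset.erase_subset _ _ hx))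
        (by
          intro v hv u hu huv
          rcases Finset.mem_erase.1 hu with ⟨hune, huV⟩
          have hvV : v ∈ V := hVup v hv u huV huv
          refine Finset.mem_erase.2 ⟨?_, hvV⟩
          have htu : t < u := lt_of_le_of_ne (V.min'_le u huV) (Ne.symm hune)
          exact (lt_of_lt_of_le htu huv).ne')
      have hsub : β' ⊆ (lvl hμ t : Set U) := by
        intro b hb
        have hbV : μ b ∈ (V.erase t : Set ℝ) := hβ'V b hb
        have : t ≤ μ b := V.min'_le _ (Finset.mem_of_mem_erase hbV)
        rw [SetLike.mem_coe, mem_lvl hμ]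
        exact le_trans (min_le_left _ _) this
      obtain ⟨β, hβt, hβ'β, hspan, hli⟩ := exists_linearIndepOn_id_extension hβ'li hsub
      refine ⟨β, ?_, hli, ?_⟩
      · intro b hb
        have h1 : min t (μ 0) ≤ μ b := (mem_lvl hμ).1 (hβt hb)
        rw [min_eq_left ht0] at h1
        exact hVup (μ b) ⟨b, rfl⟩ t htV h1
      · intro u huV
        rcases eq_or_ne u t with rfl | hut
        · rw [Set.inter_eq_self_of_subset_left hβt]
          intro x hx
          exact hspan hx
        · have huV' : u ∈ V.erase t := Finset.mem_erase.2 ⟨hut, huV⟩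
          exact le_trans (hβ'span u huV')
            (span_mono (Set.inter_subset_inter_left _ hβ'β))

end FuzzyAux


/-- Every fuzzy subspace of a finite-dimensional vector space has a fuzzy basis. -/
theorem exists_fuzzyBasis
    {F : Type*} [Field F] {U : Type*} [AddCommGroup U] [Module F U]
    [FiniteDimensional F U] (μ : U → ℝ) (hμ : IsFuzzySubspace F μ) :
    ∃ β : Set U, IsFuzzyBasis F μ β := by
  classical
  have hfin := fz_range_finite hμ
  set V := hfin.toFinset with hVdef
  have hVmem : ∀ x : U, μ x ∈ V := fun x => hfin.mem_toFinset.2 ⟨x, rfl⟩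
  obtain ⟨β, hβV, hli, hsp⟩ := fz_key hμ V (by simp [hVdef])
    (fun v hv _ _ _ => hfin.mem_toFinset.2 hv)
  have hVne : V.Nonempty := ⟨μ 0, hVmem 0⟩
  set t := V.min' hVne with htdef
  have htop : lvl hμ t = ⊤ := by
    rw [eq_top_iff]
    intro x _
    rw [mem_lvl]
    exact le_trans (min_le_left _ _) (V.min'_le (μ x) (hVmem x))
  have hspan : Submodule.span F β = ⊤ := by
    rw [eq_top_iff, ← htop]
    exact le_trans (hsp t (V.min'_mem hVne)) (Submodule.span_mono Set.inter_subset_left)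
  refine ⟨β, hli, hspan, ?_⟩
  intro s hsβ hs c hc
  obtain ⟨b₀, hb₀s, hb₀⟩ := Finset.exists_mem_eq_inf' hs μ
  set m := s.inf' hs μ with hmdef
  set x := ∑ b ∈ s, c b • b with hxdef
  have hm0 : m ≤ μ 0 := hb₀ ▸ fz_le_zero hμ b₀
  have hge : m ≤ μ x := by
    have hxl : x ∈ lvl hμ m := by
      refine Submodule.sum_mem _ fun b hb => Submodule.smul_mem _ _ ?_
      rw [mem_lvl]
      exact le_trans (min_le_left _ _) (Finset.inf'_le μ hb)
    rw [mem_lvl, min_eq_left hm0] at hxl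
    exact hxl
  refine le_antisymm ?_ hge
  by_contra hlt
  push_neg at hlt
  set t' := μ x with ht'def
  have ht'0 : t' ≤ μ 0 := fz_le_zero hμ x
  have hx_span : x ∈ Submodule.span F (β ∩ (lvl hμ t' : Set U)) := by
    refine hsp t' (hVmem x) ?_
    rw [mem_lvl]
    exact min_le_left _ _
  have hb₀β : b₀ ∈ β := hsβ hb₀s
  have hsubdiff : (β ∩ (lvl hμ t' : Set U)) ⊆ β \ {b₀} := by
    rintro b ⟨hbβ, hbl⟩
    refine ⟨hbβ, ?_⟩
    simp only [Set.mem_singleton_iff]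
    rintro rfl
    rw [SetLike.mem_coe, mem_lvl, min_eq_left ht'0, ← hb₀] at hbl
    exact absurd hbl (not_le.2 hlt)
  have hx2 : x ∈ Submodule.span F (β \ {b₀}) := Submodule.span_mono hsubdiff hx_span
  have hrest : (∑ b ∈ s.erase b₀, c b • b) ∈ Submodule.span F (β \ {b₀}) := by
    refine Submodule.sum_mem _ fun b hb => Submodule.smul_mem _ _ ?_
    rcases Finset.mem_erase.1 hb with ⟨hne, hbs⟩
    exact Submodule.subset_span ⟨hsβ hbs, by simpa using hne⟩
  have hcb₀ : c b₀ • b₀ ∈ Submodule.span F (β \ {b₀}) := by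
    have hxeq : x = c b₀ • b₀ + ∑ b ∈ s.erase b₀, c b • b :=
      (Finset.add_sum_erase s _ hb₀s).symm
    have := Submodule.sub_mem _ hx2 hrest
    rwa [hxeq, add_sub_cancel_right] at this
  have hb₀span : b₀ ∈ Submodule.span F (β \ {b₀}) := by
    have := Submodule.smul_mem _ (c b₀)⁻¹ hcb₀
    rwa [inv_smul_smul₀ (hc b₀ hb₀s)] at this
  have himg : ((↑) : β → U) '' {y : β | (y : U) ≠ b₀} = β \ {b₀} := by
    ext u
    constructor
    · rintro ⟨⟨v, hv⟩, hne, rfl⟩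
      exact ⟨hv, hne⟩
    · rintro ⟨huβ, hne⟩
      exact ⟨⟨u, huβ⟩, hne, rfl⟩
  have hnot := hli.notMem_span_image (s := {y : β | (y : U) ≠ b₀}) (x := ⟨b₀, hb₀β⟩)
    (by simp)
  rw [himg] at hnot
  exact hnot hb₀span
end

section
/- Let U be a vector space over a field F with finite dimension n, and let μ be a fuzzy subspace of U. Then the image set Im μ = {μ(x) : x ∈ U} is finite and has cardinality at most n + 1. -/
/-!
The level sets `{x | t ≤ μ x}` for `t ∈ Im μ` are subspaces of `U`, and they strictly shrink as
`t` grows. Their dimensions are therefore pairwise distinct numbers in `{0, …, n}`.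
-/

open Module

theorem Submodule.finite_and_card_le_of_strictAnti {F U ι : Type*} [DivisionRing F]
    [AddCommGroup U] [Module F U] [FiniteDimensional F U] [LinearOrder ι] {V : ι → Submodule F U}
    (hV : StrictAnti V) : Finite ι ∧ Nat.card ι ≤ finrank F U + 1 := by
  let dim : ι → Fin (finrank F U + 1) := fun i =>
    ⟨finrank F (V i), Nat.lt_succ_of_le (Submodule.finrank_le (V i))⟩
  have hdim : Function.Injective dim := fun i j hij =>
    (StrictAnti.injective fun _ _ h => Submodule.finrank_lt_finrank_of_lt (hV h))
      (congrArg Fin.val hij)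
  exact ⟨Finite.of_injective dim hdim,
    (Nat.card_le_card_of_injective dim hdim).trans_eq (Nat.card_fin _)⟩

namespace IsFuzzySubspace

variable {F U : Type*} [Field F] [AddCommGroup U] [Module F U] {μ : U → ℝ}

theorem le_apply_zero (hμ : IsFuzzySubspace F μ) (x : U) : μ x ≤ μ 0 := by
  simpa using hμ.2.2 0 x

theorem min_le_apply_add (hμ : IsFuzzySubspace F μ) (x y : U) : min (μ x) (μ y) ≤ μ (x + y) :=
  calc min (μ x) (μ y) ≤ min (μ x) (μ (-y)) := min_le_min_left _ (by simpa using hμ.2.2 (-1) y)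
    _ ≤ μ (x + y) := by simpa using hμ.2.1 x (-y)

def levelSubmodule (hμ : IsFuzzySubspace F μ) (t : ℝ) (ht : t ≤ μ 0) : Submodule F U where
  carrier := levelSet μ t
  zero_mem' := ht
  add_mem' {x y} hx hy := (le_min hx hy).trans (hμ.min_le_apply_add x y)
  smul_mem' c x hx := hx.trans (hμ.2.2 c x)

theorem levelSubmodule_strictAnti (hμ : IsFuzzySubspace F μ) :
    StrictAnti fun t : Set.range μ =>
      hμ.levelSubmodule t (by obtain ⟨_, x, rfl⟩ := t; exact hμ.le_apply_zero x) := by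
  rintro ⟨a, xa, rfl⟩ ⟨b, xb, rfl⟩ (hab : μ xa < μ xb)
  exact lt_of_le_not_ge (fun y (hy : μ xb ≤ μ y) => hab.le.trans hy) fun hle =>
    hab.not_ge (hle (show μ xa ≤ μ xa from le_rfl))

end IsFuzzySubspace

/-- For a fuzzy subspace `μ` of an `n`-dimensional space `U`, the image set
`Im μ` is finite with at most `n + 1` elements. -/
theorem image_finite_card_le
    {F : Type*} [Field F] {U : Type*} [AddCommGroup U] [Module F U]
    [FiniteDimensional F U] (μ : U → ℝ) (hμ : IsFuzzySubspace F μ) :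
    (Set.range μ).Finite ∧ (Set.range μ).ncard ≤ Module.finrank F U + 1 := by
  obtain ⟨hfin, hcard⟩ := Submodule.finite_and_card_le_of_strictAnti hμ.levelSubmodule_strictAnti
  exact ⟨Set.finite_coe_iff.mp hfin, (Nat.card_coe_set_eq _).symm.trans_le hcard⟩
end

section
/- Let U be a finite-dimensional vector space over a field F and let μ be a fuzzy subspace of U. If β and β* are any two fuzzy bases of μ, then Σ_{x ∈ β} μ(x) = Σ_{x ∈ β*} μ(x) (sums of real numbers over the finite sets β and β*). -/
open Finset

lemma multiset_eq_of_filter_card (n : ℕ) : ∀ (s s' : Multiset ℝ), s.card = n →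
    (∀ t : ℝ, (s.filter (fun x => t ≤ x)).card = (s'.filter (fun x => t ≤ x)).card) →
    s = s' := by
  induction n with
  | zero =>
    intro s s' hc h
    rw [Multiset.card_eq_zero] at hc
    subst hc
    by_contra hne
    obtain ⟨x, hx⟩ := Multiset.exists_mem_of_ne_zero (Ne.symm hne)
    have := h x
    simp at this
    have : x ∈ Multiset.filter (fun y => x ≤ y) s' := Multiset.mem_filter.2 ⟨hx, le_refl x⟩
    have h2 := h x
    rw [Multiset.filter_zero, Multiset.card_zero] at h2
    have := Multiset.card_pos_iff_exists_mem.2 ⟨x, this⟩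
    omega
  | succ k ih =>
    intro s s' hc h
    have hs0 : s ≠ 0 := by
      intro h0; subst h0; simp at hc
    obtain ⟨a, ha⟩ := Multiset.exists_mem_of_ne_zero hs0
    have htne : s.toFinset.Nonempty := ⟨a, Multiset.mem_toFinset.2 ha⟩
    set m := s.toFinset.max' htne with hm
    have hms : m ∈ s := Multiset.mem_toFinset.1 (s.toFinset.max'_mem htne)
    have hmax : ∀ x ∈ s, x ≤ m := fun x hx =>
      s.toFinset.le_max' x (Multiset.mem_toFinset.2 hx)
    -- m ∈ s'
    have hms' : m ∈ s' := by
      have h1 := h m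
      have : m ∈ Multiset.filter (fun x => m ≤ x) s := Multiset.mem_filter.2 ⟨hms, le_refl m⟩
      have hpos : 0 < (Multiset.filter (fun x => m ≤ x) s').card := by
        rw [← h1]
        exact Multiset.card_pos_iff_exists_mem.2 ⟨m, this⟩
      obtain ⟨y, hy⟩ := Multiset.card_pos_iff_exists_mem.1 hpos
      obtain ⟨hy1, hy2⟩ := Multiset.mem_filter.1 hy
      -- y ∈ s', m ≤ y; show y ≤ m so y = m
      have hym : y ≤ m := by
        by_contra hlt
        push_neg at hlt
        -- then filter (y ≤ ·) s is empty but filter on s' contains y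
        have h2 := h y
        have hempty : Multiset.filter (fun x => y ≤ x) s = 0 := by
          rw [Multiset.filter_eq_nil]
          intro x hx
          exact not_le.2 (lt_of_le_of_lt (hmax x hx) hlt)
        rw [hempty, Multiset.card_zero] at h2
        have : y ∈ Multiset.filter (fun x => y ≤ x) s' := Multiset.mem_filter.2 ⟨hy1, le_refl y⟩
        have := Multiset.card_pos_iff_exists_mem.2 ⟨y, this⟩
        omega
      have : y = m := le_antisymm hym hy2
      exact this ▸ hy1
    -- apply IH to erased
    have hcount : ∀ t : ℝ, ((s.erase m).filter (fun x => t ≤ x)).card =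
        ((s'.erase m).filter (fun x => t ≤ x)).card := by
      intro t
      have e1 : s = m ::ₘ s.erase m := (Multiset.cons_erase hms).symm
      have e2 : s' = m ::ₘ s'.erase m := (Multiset.cons_erase hms').symm
      have h1 := h t
      rw [e1, e2] at h1
      by_cases htm : t ≤ m
      · rw [Multiset.filter_cons_of_pos _ htm, Multiset.filter_cons_of_pos _ htm,
          Multiset.card_cons, Multiset.card_cons] at h1
        exact Nat.succ_injective h1
      · rw [Multiset.filter_cons_of_neg _ htm, Multiset.filter_cons_of_neg _ htm] at h1
        exact h1
    have hcard : (s.erase m).card = k := by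
      have := Multiset.card_erase_of_mem hms
      rw [hc] at this
      simpa using this
    have := ih (s.erase m) (s'.erase m) hcard hcount
    calc s = m ::ₘ s.erase m := (Multiset.cons_erase hms).symm
      _ = m ::ₘ s'.erase m := by rw [this]
      _ = s' := Multiset.cons_erase hms'


open scoped Classical
open Submodule Module

/-- For a fuzzy basis `β` and `t > 0`, the span of the filtered basis equals the span of
the level set. -/
lemma span_filter_eq_span_level
    {F : Type*} [Field F] {U : Type*} [AddCommGroup U] [Module F U]
    (μ : U → ℝ) (β : Finset U) (hβ : IsFuzzyBasis F μ (↑β : Set U)) (t : ℝ) :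
    Submodule.span F ((β.filter (fun x => t ≤ μ x) : Finset U) : Set U) =
      Submodule.span F (levelSet μ t) := by
  apply le_antisymm
  · apply Submodule.span_mono
    intro x hx
    exact (Finset.mem_filter.1 (by exact_mod_cast hx)).2
  · rw [Submodule.span_le]
    intro v hv
    -- v ∈ levelSet μ t, i.e. t ≤ μ v
    have hvt : t ≤ μ v := hv
    -- v ∈ span β = ⊤
    have hvspan : v ∈ Submodule.span F (↑β : Set U) := by
      rw [hβ.2.1]; trivial
    obtain ⟨f, hf⟩ := mem_span_finset.1 hvspan
    set s : Finset U := β.filter (fun x => f x ≠ 0) with hs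
    have hsum : ∑ x ∈ s, f x • x = v := by
      rw [← hf.2]
      apply Finset.sum_filter_of_ne
      intro x _ hne
      intro h0
      exact hne (by rw [h0, zero_smul])
    rcases s.eq_empty_or_nonempty with he | hne
    · have : v = 0 := by rw [← hsum, he, Finset.sum_empty]
      rw [this]
      exact Submodule.zero_mem _
    · have hsub : (↑s : Set U) ⊆ (↑β : Set U) := by
        intro x hx
        exact Finset.mem_coe.2 (Finset.mem_filter.1 (Finset.mem_coe.1 hx)).1
      have hmin := hβ.2.2 s hsub hne f (fun x hx => (Finset.mem_filter.1 hx).2)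
      rw [hsum] at hmin
      -- every x ∈ s has t ≤ μ x
      have hall : ∀ x ∈ s, t ≤ μ x := by
        intro x hx
        calc t ≤ μ v := hvt
          _ = s.inf' hne μ := hmin
          _ ≤ μ x := Finset.inf'_le μ hx
      have hsub2 : (↑s : Set U) ⊆ ((β.filter (fun x => t ≤ μ x) : Finset U) : Set U) := by
        intro x hx
        have hx' := Finset.mem_coe.1 hx
        exact Finset.mem_coe.2 (Finset.mem_filter.2
          ⟨(Finset.mem_filter.1 hx').1, hall x hx'⟩)
      rw [← hsum]
      exact Submodule.sum_mem _ fun x hx =>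
        Submodule.smul_mem _ _ (Submodule.subset_span (hsub2 hx))

lemma card_filter_eq
    {F : Type*} [Field F] {U : Type*} [AddCommGroup U] [Module F U]
    (μ : U → ℝ) (β : Finset U) (hβ : IsFuzzyBasis F μ (↑β : Set U)) (t : ℝ) :
    (β.filter (fun x => t ≤ μ x)).card =
      Module.finrank F (Submodule.span F (levelSet μ t)) := by
  have hli : LinearIndependent F ((↑) : (β.filter (fun x => t ≤ μ x) : Finset U) → U) := by
    apply fun h hs => LinearIndepOn.mono (R := F) (v := id)
      (t := ((β.filter (fun x => t ≤ μ x) : Finset U) : Set U)) (s := (↑β : Set U)) hs h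
    · intro x hx
      exact Finset.mem_coe.2 (Finset.mem_filter.1 (Finset.mem_coe.1 hx)).1
    · exact hβ.1
  rw [← finrank_span_finset_eq_card hli, span_filter_eq_span_level μ β hβ t]

/-- Any two fuzzy bases of a fuzzy subspace of a finite-dimensional space
have the same sum of membership values. -/
theorem fuzzyBasis_sum_eq
    {F : Type*} [Field F] {U : Type*} [AddCommGroup U] [Module F U]
    [FiniteDimensional F U] (μ : U → ℝ) (hμ : IsFuzzySubspace F μ)
    (β βstar : Finset U) (hβ : IsFuzzyBasis F μ (↑β : Set U))
    (hβstar : IsFuzzyBasis F μ (↑βstar : Set U)) :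
    ∑ x ∈ β, μ x = ∑ x ∈ βstar, μ x := by
  have key : ∀ t : ℝ, ((β.val.map μ).filter (fun x => t ≤ x)).card =
      ((βstar.val.map μ).filter (fun x => t ≤ x)).card := by
    intro t
    have h1 : ((β.val.map μ).filter (fun x => t ≤ x)).card =
        (β.filter (fun x => t ≤ μ x)).card := by
      rw [← Multiset.countP_eq_card_filter, Multiset.countP_map,
        ← Multiset.countP_eq_card_filter]
      simp [Finset.filter, Multiset.countP_eq_card_filter]
    have h2 : ((βstar.val.map μ).filter (fun x => t ≤ x)).card =
        (βstar.filter (fun x => t ≤ μ x)).card := by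
      rw [← Multiset.countP_eq_card_filter, Multiset.countP_map,
        ← Multiset.countP_eq_card_filter]
      simp [Finset.filter, Multiset.countP_eq_card_filter]
    rw [h1, h2, card_filter_eq μ β hβ t, card_filter_eq μ βstar hβstar t]
  have := multiset_eq_of_filter_card (β.val.map μ).card (β.val.map μ) (βstar.val.map μ)
    rfl key
  calc ∑ x ∈ β, μ x = (β.val.map μ).sum := rfl
    _ = (βstar.val.map μ).sum := by rw [this]
    _ = ∑ x ∈ βstar, μ x := rfl
end

section
/- Let U be a vector space over a field F and let μ be a fuzzy subspace of U such that the image set Im μ = {μ(x) : x ∈ U} is upper well ordered, i.e., every nonempty subset of Im μ has a greatest element. Let A be a proper subspace of U and let β be a fuzzy basis of the restriction μ|A. Then there exists w ∈ U with w ∉ A such that β ∪ {w} is a fuzzy basis of μ|A*, where A* is the subspace spanned by A ∪ {w}. -/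
lemma fuzzy_smul_eq {F : Type*} [Field F] {U : Type*} [AddCommGroup U] [Module F U]
    {μ : U → ℝ} (hμ : IsFuzzySubspace F μ) {c : F} (hc : c ≠ 0) (x : U) :
    μ (c • x) = μ x := by
  refine le_antisymm ?_ (hμ.2.2 c x)
  have h := hμ.2.2 c⁻¹ (c • x)
  rwa [smul_smul, inv_mul_cancel₀ hc, one_smul] at h

lemma fuzzy_add_ge {F : Type*} [Field F] {U : Type*} [AddCommGroup U] [Module F U]
    {μ : U → ℝ} (hμ : IsFuzzySubspace F μ) (x y : U) :
    min (μ x) (μ y) ≤ μ (x + y) := by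
  have h1 : μ y ≤ μ (-y) := by
    have := hμ.2.2 (-1 : F) y
    rwa [neg_one_smul] at this
  calc min (μ x) (μ y) ≤ min (μ x) (μ (-y)) := min_le_min le_rfl h1
    _ ≤ μ (x - -y) := hμ.2.1 x (-y)
    _ = μ (x + y) := by rw [sub_neg_eq_add]

/-- Extension of a fuzzy basis of the restriction of `μ` to a proper subspace
`A` by a single vector `w ∉ A`, when `Im μ` is upper well ordered. -/
theorem fuzzyBasisOn_extend_one
    {F : Type*} [Field F] {U : Type*} [AddCommGroup U] [Module F U]
    (μ : U → ℝ) (hμ : IsFuzzySubspace F μ)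
    (hwo : ∀ T ⊆ Set.range μ, T.Nonempty → ∃ m ∈ T, ∀ r ∈ T, r ≤ m)
    (A : Submodule F U) (hA : A ≠ ⊤)
    (β : Set U) (hβ : IsFuzzyBasisOn F μ (A : Set U) β) :
    ∃ w : U, w ∉ A ∧
      IsFuzzyBasisOn F μ (Submodule.span F ((A : Set U) ∪ {w}) : Set U) (β ∪ {w}) := by
  classical
  -- choose v ∉ A
  have hv : ∃ v : U, v ∉ A := by
    by_contra h
    push_neg at h
    exact hA (Submodule.eq_top_iff'.mpr h)
  obtain ⟨v, hv⟩ := hv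
  -- maximize μ over the coset v + A
  set T : Set ℝ := μ '' ((fun a => v + a) '' (A : Set U)) with hT
  have hTsub : T ⊆ Set.range μ := by
    rintro r ⟨x, -, rfl⟩
    exact ⟨x, rfl⟩
  have hTne : T.Nonempty := ⟨μ (v + 0), ⟨v + 0, ⟨0, A.zero_mem, rfl⟩, rfl⟩⟩
  obtain ⟨m, hmT, hmax⟩ := hwo T hTsub hTne
  obtain ⟨x, ⟨a₀, ha₀, rfl⟩, rfl⟩ := hmT
  set w : U := v + a₀ with hwdef
  have hwA : w ∉ A := by
    intro hw
    rw [hwdef] at hw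
    have h2 : v + a₀ - a₀ ∈ A := A.sub_mem hw ha₀
    rw [add_sub_cancel_right] at h2
    exact hv h2
  have hmax' : ∀ b ∈ A, μ (w + b) ≤ μ w := by
    intro b hb
    have : w + b = v + (a₀ + b) := by rw [hwdef, add_assoc]
    rw [this]
    exact hmax _ ⟨v + (a₀ + b), ⟨a₀ + b, A.add_mem ha₀ hb, rfl⟩, rfl⟩
  have hwβ : w ∉ β := fun h => hwA (hβ.1 h)
  have hspanβ : Submodule.span F β ≤ A := Submodule.span_le.mpr hβ.1
  -- the key computation
  have key : ∀ y ∈ A, ∀ (cc : F), cc ≠ 0 → μ (cc • w + y) = min (μ w) (μ y) := by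
    intro y hy cc hcc
    have hcw : μ (cc • w) = μ w := fuzzy_smul_eq hμ hcc w
    have hge : min (μ w) (μ y) ≤ μ (cc • w + y) := by
      calc min (μ w) (μ y) = min (μ (cc • w)) (μ y) := by rw [hcw]
        _ ≤ μ (cc • w + y) := fuzzy_add_ge hμ _ _
    have hle : μ (cc • w + y) ≤ μ w := by
      have h1 : cc • w + y = cc • (w + cc⁻¹ • y) := by
        conv_rhs => rw [smul_add, smul_inv_smul₀ hcc]
      rw [h1, fuzzy_smul_eq hμ hcc]
      exact hmax' _ (A.smul_mem _ hy)
    rcases le_or_gt (μ w) (μ y) with h | h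
    · rw [min_eq_left h]
      exact le_antisymm hle ((le_min le_rfl h).trans hge)
    · rw [min_eq_right h.le]
      rw [min_eq_right h.le] at hge
      refine le_antisymm ?_ hge
      by_contra hlt
      push_neg at hlt
      have h2 : min (μ (cc • w + y)) (μ (cc • w)) ≤ μ ((cc • w + y) - cc • w) :=
        hμ.2.1 _ _
      rw [add_sub_cancel_left] at h2
      have h3 : μ y < min (μ (cc • w + y)) (μ (cc • w)) :=
        lt_min hlt (by rw [hcw]; exact h)
      exact absurd h2 (not_le.mpr h3)
  refine ⟨w, hwA, ?_, ?_, ?_, ?_⟩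
  · -- β ∪ {w} ⊆ span (A ∪ {w})
    rintro x (hx | hx)
    · exact Submodule.subset_span (Or.inl (hβ.1 hx))
    · exact Submodule.subset_span (Or.inr hx)
  · -- linear independence
    rw [Set.union_singleton]
    exact LinearIndepOn.id_insert hβ.2.1 (fun h => hwA (hspanβ h))
  · -- spanning
    intro x hx
    have hle : Submodule.span F ((A : Set U) ∪ {w}) ≤ Submodule.span F (β ∪ {w}) := by
      rw [Submodule.span_le]
      rintro z (hz | hz)
      · exact Submodule.span_mono Set.subset_union_left (hβ.2.2.1 hz)
      · exact Submodule.subset_span (Or.inr hz)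
    exact hle hx
  · -- fuzzy min condition
    intro s hsub hne c hc
    by_cases hws : w ∈ s
    · have htβ : ↑(s.erase w) ⊆ β := by
        intro x hx
        have hxs : x ∈ s := Finset.mem_of_mem_erase hx
        have hxw : x ≠ w := Finset.ne_of_mem_erase hx
        rcases hsub hxs with h | h
        · exact h
        · exact absurd h (by simpa using hxw)
      have hsum : ∑ x ∈ s, c x • x = c w • w + ∑ x ∈ s.erase w, c x • x :=
        (Finset.add_sum_erase s (fun x => c x • x) hws).symm
      rcases Finset.eq_empty_or_nonempty (s.erase w) with hte | htne
      · have hμw : μ (∑ x ∈ s, c x • x) = μ w := by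
          rw [hsum, hte, Finset.sum_empty, add_zero]
          exact fuzzy_smul_eq hμ (hc w hws) w
        have hsw : ∀ x ∈ s, x = w := by
          intro x hx
          by_contra hxw
          exact Finset.notMem_empty x (hte ▸ Finset.mem_erase.mpr ⟨hxw, hx⟩)
        rw [hμw]
        refine le_antisymm (Finset.le_inf' hne μ fun x hx => by rw [hsw x hx])
          (Finset.inf'_le μ hws)
      · have hyA : (∑ x ∈ s.erase w, c x • x) ∈ A :=
          Submodule.sum_mem A fun x hx => A.smul_mem _ (hβ.1 (htβ hx))
        have hct : ∀ x ∈ s.erase w, c x ≠ 0 := fun x hx => hc x (Finset.mem_of_mem_erase hx)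
        have hμy : μ (∑ x ∈ s.erase w, c x • x) = (s.erase w).inf' htne μ :=
          hβ.2.2.2 (s.erase w) htβ htne c hct
        have hinf : s.inf' hne μ = min (μ w) ((s.erase w).inf' htne μ) := by
          have h1 : s.inf' hne μ = ((insert w (s.erase w)).inf'
              (Finset.insert_nonempty w (s.erase w)) μ) := by
            congr 1
            exact (Finset.insert_erase hws).symm
          rw [h1, Finset.inf'_insert (H := htne)]
        rw [hsum, key _ hyA (c w) (hc w hws), hμy, hinf]
    · have hsβ : ↑s ⊆ β := by
        intro x hx
        rcases hsub hx with h | h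
        · exact h
        · exact absurd hx (by simpa using h ▸ hws)
      exact hβ.2.2.2 s hsβ hne c hc
end

section
/- Let f : U → V be a linear isomorphism between finite-dimensional vector spaces over a field F and let μ be a fuzzy subspace of U. If β = {x₁, …, xₙ} is a fuzzy basis of μ, then f(β) = {f(x₁), …, f(xₙ)} is a fuzzy basis of the fuzzy subspace f(μ) of V. -/
lemma fuzzyImage_apply_of_injective {U V : Type*} (f : U → V) (hf : Function.Injective f)
    (μ : U → ℝ) (x : U) : fuzzyImage f μ (f x) = μ x := by
  have : {x' | f x' = f x} = {x} := by
    ext x'; simp [hf.eq_iff]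
  simp [fuzzyImage, this]

/-- The image of a fuzzy basis of `μ` under a linear isomorphism `f` is a
fuzzy basis of the fuzzy subspace `f(μ)`. -/
theorem fuzzyImage_fuzzyBasis
    {F : Type*} [Field F] {U V : Type*} [AddCommGroup U] [Module F U]
    [AddCommGroup V] [Module F V] [FiniteDimensional F U] [FiniteDimensional F V]
    [DecidableEq V]
    (f : U ≃ₗ[F] V) (μ : U → ℝ) (hμ : IsFuzzySubspace F μ)
    (β : Finset U) (hβ : IsFuzzyBasis F μ (↑β : Set U)) :
    IsFuzzyBasis F (fuzzyImage (⇑f) μ) (↑(β.image (⇑f)) : Set V) := by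
  obtain ⟨hli, hspan, hmin⟩ := hβ
  have hinj : Function.Injective (⇑f) := f.injective
  have h1 : ((β.image (⇑f) : Finset V) : Set V) = ⇑f '' (β : Set U) :=
    Finset.coe_image
  refine ⟨?_, ?_, ?_⟩
  · -- linear independence
    have hli2 : LinearIndependent F fun x : (β : Set U) => f x :=
      hli.map' f.toLinearMap (LinearMap.ker_eq_bot.mpr hinj)
    have := LinearIndepOn.id_image (v := ⇑f) (s := (β : Set U)) hli2
    rw [h1]
    exact this
  · -- span
    rw [h1, ← LinearEquiv.coe_coe, ← Submodule.map_span, hspan, Submodule.map_top, LinearMap.range_eq_top]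
    exact f.surjective
  · -- fuzzy min
    intro s hsub hs c hc
    classical
    set t : Finset U := s.image (⇑f.symm) with ht
    have hts : t.image (⇑f) = s := by
      rw [ht, Finset.image_image]
      ext y
      simp
    have htne : t.Nonempty := hs.image _
    have htsub : ↑t ⊆ (β : Set U) := by
      intro x hx
      rw [ht] at hx
      simp only [Finset.coe_image, Set.mem_image] at hx
      obtain ⟨y, hy, rfl⟩ := hx
      have := hsub hy
      simp only [Finset.coe_image, Set.mem_image] at this
      obtain ⟨z, hz, rfl⟩ := this
      simpa using hz
    have hsum : ∑ x ∈ s, c x • x = f (∑ y ∈ t, (c ∘ ⇑f) y • y) := by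
      rw [map_sum, ← hts, Finset.sum_image (fun a _ b _ h => hinj h)]
      apply Finset.sum_congr rfl
      intro x _
      simp [map_smul]
    rw [hsum, fuzzyImage_apply_of_injective _ hinj]
    rw [hmin t htsub htne (c ∘ ⇑f) (by
      intro x hx
      rw [ht] at hx
      simp only [Finset.mem_image] at hx
      obtain ⟨y, hy, rfl⟩ := hx
      simpa using hc y hy)]
    have hfun : fuzzyImage (⇑f) μ = μ ∘ ⇑f.symm := by
      funext y
      have := fuzzyImage_apply_of_injective (⇑f) hinj μ (f.symm y)
      simpa using this
    rw [hfun]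
    exact Finset.inf'_image htne μ
end

section
/- Let U and V be finite-dimensional vector spaces over a field F, let μ be a fuzzy subspace of U and η a fuzzy subspace of V, and suppose there is a linear isomorphism f : U → V with f(μ) = η. Then for every t ∈ [0,1]: the level subset μ_t is empty if and only if η_t is empty; and whenever they are nonempty, for every fuzzy basis β of the restriction μ|μ_t and every fuzzy basis β' of the restriction η|η_t, Σ_{x ∈ β} μ(x) = Σ_{y ∈ β'} η(y). -/
open Submodule Module

/-- Multiset counting lemma: equal "≥ s" counts imply equal multisets. -/
lemma multiset_eq_of_counts (m m' : Multiset ℝ)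
    (h : ∀ s : ℝ, (m.filter (s ≤ ·)).card = (m'.filter (s ≤ ·)).card) : m = m' := by
  ext a
  have key : ∀ n : Multiset ℝ, (n.filter (a ≤ ·)).card
      = n.count a + (n.filter (a < ·)).card := by
    intro n
    rw [Multiset.count_eq_card_filter_eq]
    have key2 : Multiset.filter (fun x => a = x) n + Multiset.filter (fun x => a < x) n
        = Multiset.filter (fun x => a ≤ x) n := by
      rw [Multiset.filter_add_filter]
      have h1 : Multiset.filter (fun x => a = x ∨ a < x) n
          = Multiset.filter (fun x => a ≤ x) n := by
        apply Multiset.filter_congr; intro x _; constructor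
        · rintro (rfl | h)
          · exact le_refl _
          · exact le_of_lt h
        · intro h; exact h.eq_or_lt
      have h2 : Multiset.filter (fun x => a = x ∧ a < x) n = 0 := by
        rw [Multiset.filter_eq_nil]; rintro x _ ⟨rfl, h⟩; exact lt_irrefl _ h
      rw [h1, h2, add_zero]
    rw [← key2, Multiset.card_add]
  have hgt : (m.filter (a < ·)).card = (m'.filter (a < ·)).card := by
    classical
    set T := ((m + m').toFinset).filter (a < ·) with hT
    by_cases hTe : T.Nonempty
    · set s := T.min' hTe with hs
      have has : a < s := (Finset.mem_filter.mp (T.min'_mem hTe)).2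
      have hiff : ∀ n : Multiset ℝ, n ≤ m + m' →
          n.filter (a < ·) = n.filter (s ≤ ·) := by
        intro n hn
        apply Multiset.filter_congr
        intro x hx
        constructor
        · intro hax
          apply T.min'_le
          exact Finset.mem_filter.mpr ⟨Multiset.mem_toFinset.mpr (Multiset.mem_of_le hn hx), hax⟩
        · intro hsx; exact lt_of_lt_of_le has hsx
      rw [hiff m (Multiset.le_add_right _ _), hiff m' (Multiset.le_add_left _ _), h s]
    · have hiff : ∀ n : Multiset ℝ, n ≤ m + m' → n.filter (a < ·) = 0 := by
        intro n hn
        rw [Multiset.filter_eq_nil]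
        intro x hx hax
        exact hTe ⟨x, Finset.mem_filter.mpr ⟨Multiset.mem_toFinset.mpr (Multiset.mem_of_le hn hx), hax⟩⟩
      rw [hiff m (Multiset.le_add_right _ _), hiff m' (Multiset.le_add_left _ _)]
  have := h a
  rw [key m, key m', hgt] at this
  omega

/-- Counting lemma: the number of basis vectors with value ≥ s is the rank of the
span of the level set at max s t. -/
lemma fuzzy_count {F U : Type*} [Field F] [AddCommGroup U] [Module F U]
    [FiniteDimensional F U] (μ : U → ℝ) (t : ℝ) (β : Finset U)
    (hb : IsFuzzyBasisOn F μ (levelSet μ t) (↑β : Set U)) (s : ℝ) :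
    (β.filter (fun x => s ≤ μ x)).card
      = finrank F (span F (levelSet μ (max s t))) := by
  classical
  obtain ⟨hsub, hli, hspan, hmin⟩ := hb
  rcases le_or_gt s t with hst | hst
  · rw [max_eq_right hst]
    have hfil : β.filter (fun x => s ≤ μ x) = β :=
      Finset.filter_true_of_mem fun x hx => le_trans hst (hsub hx)
    have hspaneq : span F (levelSet μ t) = span F (↑β : Set U) :=
      le_antisymm (span_le.mpr hspan) (span_mono hsub)
    rw [hfil, hspaneq, finrank_span_finset_eq_card hli]
  · rw [max_eq_left hst.le]
    set βs := β.filter (fun x => s ≤ μ x) with hβs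
    have hβsβ : (βs : Set U) ⊆ (β : Set U) := Finset.coe_subset.mpr (Finset.filter_subset _ _)
    have hspaneq : span F (levelSet μ s) = span F (↑βs : Set U) := by
      apply le_antisymm
      · rw [span_le]
        intro w hw
        have hwt : w ∈ levelSet μ t := le_trans hst.le hw
        obtain ⟨c, hc⟩ := mem_span_finset.mp (hspan hwt)
        set s' := β.filter (fun x => c x ≠ 0) with hs'
        have hsum : ∑ x ∈ s', c x • x = w := by
          rw [← hc.2]
          apply Finset.sum_filter_of_ne
          intro x _ hne hc0
          exact hne (by rw [hc0, zero_smul])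
        rcases s'.eq_empty_or_nonempty with he | hne
        · have : w = 0 := by rw [← hsum, he, Finset.sum_empty]
          rw [this]; exact (span F (↑βs : Set U)).zero_mem
        · have hμw : μ w = s'.inf' hne μ := by
            rw [← hsum]
            exact hmin s' (Finset.coe_subset.mpr (Finset.filter_subset _ _)) hne c
              (fun x hx => (Finset.mem_filter.mp hx).2)
          have hs'βs : s' ⊆ βs := by
            intro x hx
            rw [hβs, Finset.mem_filter]
            refine ⟨(Finset.mem_filter.mp hx).1, ?_⟩
            calc s ≤ μ w := hw
              _ ≤ μ x := hμw ▸ Finset.inf'_le μ hx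
          rw [← hsum]
          exact sum_mem fun x hx => smul_mem _ _ (subset_span (hs'βs hx))
      · exact span_mono (fun x hx => (Finset.mem_filter.mp (by exact_mod_cast hx)).2)
    rw [hspaneq, finrank_span_finset_eq_card (LinearIndepOn.mono (R := F) (v := id) hli hβsβ)]

private theorem isomorphic_dim_levels_aux
    {F : Type*} [Field F] {U V : Type*} [AddCommGroup U] [Module F U]
    [AddCommGroup V] [Module F V] [FiniteDimensional F U] [FiniteDimensional F V]
    (μ : U → ℝ) (η : V → ℝ) (hμ : IsFuzzySubspace F μ) (hη : IsFuzzySubspace F η)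
    (f : U ≃ₗ[F] V) (hf : (fun y => sSup (μ '' {x | f x = y})) = η) :
    ∀ t ∈ Set.Icc (0 : ℝ) 1,
      (levelSet μ t = ∅ ↔ levelSet η t = ∅) ∧
      ((levelSet μ t).Nonempty → (levelSet η t).Nonempty →
        ∀ (β : Finset U) (β' : Finset V),
          IsFuzzyBasisOn F μ (levelSet μ t) (↑β : Set U) →
          IsFuzzyBasisOn F η (levelSet η t) (↑β' : Set V) →
          ∑ x ∈ β, μ x = ∑ y ∈ β', η y) := by
  classical
  have hη' : ∀ y, η y = μ (f.symm y) := by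
    intro y
    rw [← hf]
    have : {x | f x = y} = {f.symm y} := by
      ext x
      simp only [Set.mem_setOf_eq, Set.mem_singleton_iff]
      exact ⟨fun h => by rw [← h, LinearEquiv.symm_apply_apply],
        fun h => by rw [h, LinearEquiv.apply_symm_apply]⟩
    simp only []
    rw [this, Set.image_singleton, csSup_singleton]
  have hlev : ∀ r : ℝ, levelSet η r = f '' levelSet μ r := by
    intro r
    ext y
    constructor
    · intro hy
      exact ⟨f.symm y, by rwa [levelSet, Set.mem_setOf_eq, ← hη' y], by simp⟩
    · rintro ⟨x, hx, rfl⟩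
      rw [levelSet, Set.mem_setOf_eq, hη', LinearEquiv.symm_apply_apply]
      exact hx
  intro t _
  constructor
  · rw [hlev t, Set.image_eq_empty]
  · intro _ _ β β' hβ hβ'
    have hrank : ∀ r : ℝ,
        finrank F (span F (levelSet η r)) = finrank F (span F (levelSet μ r)) := by
      intro r
      rw [hlev r, ← LinearEquiv.coe_coe, ← Submodule.map_span]
      exact LinearEquiv.finrank_map_eq f _
    have hms : β.val.map μ = β'.val.map η := by
      apply multiset_eq_of_counts
      intro s
      rw [Multiset.filter_map, Multiset.filter_map, Multiset.card_map, Multiset.card_map]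
      have h1 : Multiset.card (Multiset.filter ((s ≤ ·) ∘ μ) β.val)
          = (β.filter (fun x => s ≤ μ x)).card := rfl
      have h2 : Multiset.card (Multiset.filter ((s ≤ ·) ∘ η) β'.val)
          = (β'.filter (fun y => s ≤ η y)).card := rfl
      rw [h1, h2, fuzzy_count μ t β hβ s, fuzzy_count η t β' hβ' s, hrank]
    calc ∑ x ∈ β, μ x = (β.val.map μ).sum := rfl
      _ = (β'.val.map η).sum := by rw [hms]
      _ = ∑ y ∈ β', η y := rfl

/-- If `f(μ) = η` for a linear isomorphism `f`, then for every `t ∈ [0,1]`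
the level subsets `μ_t`, `η_t` are simultaneously empty, and when nonempty, any fuzzy
bases of the restrictions `μ|μ_t` and `η|η_t` have equal sums of membership values. -/
theorem isomorphic_dim_levels
    {F : Type*} [Field F] {U V : Type*} [AddCommGroup U] [Module F U]
    [AddCommGroup V] [Module F V] [FiniteDimensional F U] [FiniteDimensional F V]
    (μ : U → ℝ) (η : V → ℝ) (hμ : IsFuzzySubspace F μ) (hη : IsFuzzySubspace F η)
    (f : U ≃ₗ[F] V) (hf : fuzzyImage (⇑f) μ = η) :
    ∀ t ∈ Set.Icc (0 : ℝ) 1,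
      (levelSet μ t = ∅ ↔ levelSet η t = ∅) ∧
      ((levelSet μ t).Nonempty → (levelSet η t).Nonempty →
        ∀ (β : Finset U) (β' : Finset V),
          IsFuzzyBasisOn F μ (levelSet μ t) (↑β : Set U) →
          IsFuzzyBasisOn F η (levelSet η t) (↑β' : Set V) →
          ∑ x ∈ β, μ x = ∑ y ∈ β', η y) := by
  exact isomorphic_dim_levels_aux μ η hμ hη f hf
end
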